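/- arXiv:1505.06288 — 2 statements merged into one kernel-verified Lean document; each statement's English description precedes it below -/
import Mathlib

section
/- For a compact linear operator T on an infinite-dimensional Banach space and a nonzero eigenvalue μ of T, the generalized eigenspace N((T−μ)^α) is finite dimensional for every natural number α. -/
/-- Riesz: on `ker (f - c • 1)` the compact operator `c⁻¹ • f` restricts to the identity, so the
identity of that closed subspace is compact. -/
theorem IsCompactOperator.finiteDimensional_ker_sub_smul_one {𝕜 E : Type*}
    [NontriviallyNormedField 𝕜] [CompleteSpace 𝕜] [AddCommGroup E] [Module 𝕜 E]
    [TopologicalSpace E] [T2Space E] [IsTopologicalAddGroup E] [ContinuousSMul 𝕜 E]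
    {f : E →L[𝕜] E} (hf : IsCompactOperator f) {c : 𝕜} (hc : c ≠ 0) :
    FiniteDimensional 𝕜 (LinearMap.ker ((f - c • 1 : E →L[𝕜] E) : E →ₗ[𝕜] E)) := by
  set K := LinearMap.ker ((f - c • 1 : E →L[𝕜] E) : E →ₗ[𝕜] E)
  have hfix : ∀ x ∈ K, (c⁻¹ • f) x = x := fun x hx => by
    have hx : f x = c • x := sub_eq_zero.mp hx
    simp [hx, smul_smul, inv_mul_cancel₀ hc]
  have hmaps : ∀ x ∈ K, ((c⁻¹ • f : E →L[𝕜] E) : E →ₗ[𝕜] E) x ∈ K := fun x hx => by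
    rw [ContinuousLinearMap.coe_coe, hfix x hx]
    exact hx
  have hid : ((c⁻¹ • f : E →L[𝕜] E) : E →ₗ[𝕜] E).restrict hmaps = LinearMap.id :=
    LinearMap.ext fun x => Subtype.ext (hfix x x.2)
  have hcomp := (hf.smul c⁻¹).restrict hmaps (f - c • 1).isClosed_ker
  rw [hid] at hcomp
  exact .of_isCompactOperator_id hcomp

theorem stmt_2_general {V : Type*} [NormedAddCommGroup V] [NormedSpace ℂ V]
    (T : V →L[ℂ] V) (hT : IsCompactOperator T)
    (μ : ℂ) (hμ : μ ≠ 0) (α : ℕ) :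
    FiniteDimensional ℂ
      (LinearMap.ker (((T - μ • (1 : V →L[ℂ] V)) ^ α : V →L[ℂ] V) : V →ₗ[ℂ] V)) := by
  -- `(T - μ) - (-μ) = T` divides `(T - μ)^α - (-μ)^α`, so `(T - μ)^α` is compact minus a
  -- nonzero scalar.
  obtain ⟨P, hP⟩ : T ∣ (T - μ • 1) ^ α - ((-μ) ^ α • 1 : V →L[ℂ] V) := by
    have hdvd := ((Commute.one_right (T - μ • 1)).smul_right (-μ)).sub_dvd_pow_sub_pow α
    rwa [show T - μ • 1 - (-μ) • 1 = T by module, smul_pow, one_pow] at hdvd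
  have hpow : (T - μ • 1) ^ α = T * P - (-(-μ) ^ α) • (1 : V →L[ℂ] V) := by
    rw [← hP]; module
  rw [hpow]
  exact (hT.comp_clm P).finiteDimensional_ker_sub_smul_one (by simp [hμ])

/-- generalized eigenspaces of a compact operator at a nonzero
eigenvalue are finite dimensional. -/
theorem stmt_2 {V : Type*} [NormedAddCommGroup V] [NormedSpace ℂ V] [CompleteSpace V]
    (hinf : ¬ FiniteDimensional ℂ V)
    (T : V →L[ℂ] V) (hT : IsCompactOperator T)
    (μ : ℂ) (hμ : μ ≠ 0) (heig : ∃ u : V, u ≠ 0 ∧ T u = μ • u) (α : ℕ) :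
    FiniteDimensional ℂ
      (LinearMap.ker (((T - μ • (1 : V →L[ℂ] V)) ^ α : V →L[ℂ] V) : V →ₗ[ℂ] V)) :=
  stmt_2_general T hT μ hμ α
end

section
/- Let T be a compact operator on a complex Banach space and μ ≠ 0. Then there exists a smallest natural number α (the ascent of μ) such that ker((T−μI)^α) = ker((T−μI)^{α+1}). -/
/-! If the kernels `N n = ker (T - μ)^n` grew strictly forever, Riesz's lemma would give bounded
`x n ∈ N (n + 1)` at distance at least `1` from `N n`. As `T - μ` maps `N (n + 1)` into `N n`,
for `m < n` the difference `T x n - T x m` lies in `μ • (x n - N n)`, so the `T x n` are pairwise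
`‖μ‖`-apart, which is impossible inside the compact closure of the image of a ball. -/

theorem IsCompact.exists_lt_dist_lt {α : Type*} [PseudoMetricSpace α] {K : Set α}
    (hK : IsCompact K) {f : ℕ → α} (hf : ∀ n, f n ∈ K) {ε : ℝ} (hε : 0 < ε) :
    ∃ m n, m < n ∧ dist (f m) (f n) < ε := by
  obtain ⟨_, -, φ, hφ, hlim⟩ := hK.tendsto_subseq hf
  obtain ⟨N, hN⟩ := Metric.cauchySeq_iff'.1 hlim.cauchySeq ε hε
  exact ⟨φ N, φ (N + 1), hφ N.lt_succ_self, by rw [dist_comm]; exact hN _ N.le_succ⟩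

section RieszChain

variable {𝕜 E : Type*} [NontriviallyNormedField 𝕜] [NormedAddCommGroup E] [NormedSpace 𝕜 E]

theorem riesz_lemma_of_norm_lt_of_lt {c : 𝕜} (hc : 1 < ‖c‖) {R : ℝ} (hR : ‖c‖ < R)
    {F G : Submodule 𝕜 E} (hF : IsClosed (F : Set E)) (hFG : F < G) :
    ∃ x ∈ G, ‖x‖ ≤ R ∧ ∀ y ∈ F, 1 ≤ ‖x - y‖ := by
  have hF' : IsClosed (F.comap G.subtype : Set G) := hF.preimage continuous_subtype_val
  obtain ⟨z, hzG, hzF⟩ := SetLike.exists_of_lt hFG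
  obtain ⟨x, hxR, hxF⟩ := riesz_lemma_of_norm_lt hc hR hF' ⟨⟨z, hzG⟩, hzF⟩
  exact ⟨x, x.2, hxR, fun y hy ↦ hxF ⟨y, hFG.le hy⟩ hy⟩

theorem IsCompactOperator.exists_eq_succ_of_mapsTo_sub_smul {T : E →L[𝕜] E}
    (hT : IsCompactOperator T) {μ : 𝕜} (hμ : μ ≠ 0) {F : ℕ → Submodule 𝕜 E} (hF : Monotone F)
    (hF_closed : ∀ n, IsClosed (F n : Set E))
    (hTF : ∀ n, ∀ x ∈ F (n + 1), (T - μ • 1) x ∈ F n) :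
    ∃ n, F n = F (n + 1) := by
  by_contra! hne
  obtain ⟨c, hc⟩ := NormedField.exists_one_lt_norm 𝕜
  have hstep (n : ℕ) : ∃ x ∈ F (n + 1), ‖x‖ ≤ ‖c‖ + 1 ∧ ∀ y ∈ F n, 1 ≤ ‖x - y‖ :=
    riesz_lemma_of_norm_lt_of_lt hc (lt_add_one _) (hF_closed n)
      ((hF n.le_succ).lt_of_ne (hne n))
  choose x hxF hx_norm hx_far using hstep
  have hsep (m n : ℕ) (hmn : m < n) : ‖μ‖ ≤ dist (T (x m)) (T (x n)) := by
    set S := T - μ • 1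
    let u := x m + μ⁻¹ • (S (x m) - S (x n))
    have hu : u ∈ F n := by
      have hxm : x m ∈ F n := hF hmn (hxF m)
      refine add_mem hxm (Submodule.smul_mem _ _ (sub_mem ?_ (hTF n _ (hxF n))))
      exact hF hmn.le (hTF m _ (hxF m))
    have hTu : T (x n) - T (x m) = μ • (x n - u) := by
      simp only [u, S, sub_apply, smul_apply, one_apply_eq_self, smul_sub, smul_add,
        smul_inv_smul₀ hμ]
      abel
    rw [dist_comm, dist_eq_norm, hTu, norm_smul]
    exact le_mul_of_one_le_right (norm_nonneg μ) (hx_far n u hu)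
  obtain ⟨K, hK, hTK⟩ := hT.image_closedBall_subset_compact (‖c‖ + 1)
  obtain ⟨m, n, hmn, hdist⟩ := hK.exists_lt_dist_lt
    (fun n ↦ hTK ⟨x n, mem_closedBall_zero_iff.2 (hx_norm n), rfl⟩) (norm_pos_iff.2 hμ)
  exact (hsep m n hmn).not_gt hdist

theorem IsCompactOperator.exists_ker_pow_eq_ker_pow_succ {T : E →L[𝕜] E}
    (hT : IsCompactOperator T) {μ : 𝕜} (hμ : μ ≠ 0) :
    ∃ n, LinearMap.ker (((T - μ • 1) ^ n : E →L[𝕜] E) : E →ₗ[𝕜] E) =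
      LinearMap.ker (((T - μ • 1) ^ (n + 1) : E →L[𝕜] E) : E →ₗ[𝕜] E) := by
  set S := T - μ • 1
  simp only [ContinuousLinearMap.toLinearMap_pow]
  refine hT.exists_eq_succ_of_mapsTo_sub_smul hμ (S : Module.End 𝕜 E).iterateKer.monotone
    (fun n ↦ ?_) (fun n x hx ↦ ?_)
  · simpa [← ContinuousLinearMap.toLinearMap_pow] using (S ^ n).isClosed_ker
  · rw [LinearMap.mem_ker, pow_succ, Module.End.mul_apply] at hx
    exact hx

end RieszChain

theorem stmt_3_general {V : Type*} [NormedAddCommGroup V] [NormedSpace ℂ V]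
    (T : V →L[ℂ] V) (hT : IsCompactOperator T) (μ : ℂ) (hμ : μ ≠ 0) :
    ∃ α : ℕ,
      (LinearMap.ker (((T - μ • (1 : V →L[ℂ] V)) ^ α : V →L[ℂ] V) : V →ₗ[ℂ] V) =
       LinearMap.ker (((T - μ • (1 : V →L[ℂ] V)) ^ (α + 1) : V →L[ℂ] V) : V →ₗ[ℂ] V)) ∧
      ∀ β : ℕ,
        (LinearMap.ker (((T - μ • (1 : V →L[ℂ] V)) ^ β : V →L[ℂ] V) : V →ₗ[ℂ] V) =
         LinearMap.ker (((T - μ • (1 : V →L[ℂ] V)) ^ (β + 1) : V →L[ℂ] V) : V →ₗ[ℂ] V)) →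
        α ≤ β := by
  classical
  have h := hT.exists_ker_pow_eq_ker_pow_succ hμ
  exact ⟨Nat.find h, Nat.find_spec h, fun β hβ ↦ Nat.find_le hβ⟩

/-- existence of a smallest ascent for a compact operator at μ ≠ 0. -/
theorem stmt_3 {V : Type*} [NormedAddCommGroup V] [NormedSpace ℂ V] [CompleteSpace V]
    (T : V →L[ℂ] V) (hT : IsCompactOperator T) (μ : ℂ) (hμ : μ ≠ 0) :
    ∃ α : ℕ,
      (LinearMap.ker (((T - μ • (1 : V →L[ℂ] V)) ^ α : V →L[ℂ] V) : V →ₗ[ℂ] V) =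
       LinearMap.ker (((T - μ • (1 : V →L[ℂ] V)) ^ (α + 1) : V →L[ℂ] V) : V →ₗ[ℂ] V)) ∧
      ∀ β : ℕ,
        (LinearMap.ker (((T - μ • (1 : V →L[ℂ] V)) ^ β : V →L[ℂ] V) : V →ₗ[ℂ] V) =
         LinearMap.ker (((T - μ • (1 : V →L[ℂ] V)) ^ (β + 1) : V →L[ℂ] V) : V →ₗ[ℂ] V)) →
        α ≤ β :=
  stmt_3_general T hT μ hμ
end
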